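/- Let n ≥ 1, A an n×n complex matrix, and H_s := (A + Aᴴ)/2 its Hermitian part. Let Θ₁₁, Θ₂₂, Θ₁₃, Θ₃₃ ∈ ℝ with Θ₁₁ ≥ Θ₂₂, and suppose Q := (Θ₁₁ − Θ₂₂)·H_s² + Θ₂₂·AᴴA + 2Θ₁₃·H_s + Θ₃₃·I is negative semidefinite. Let u ∈ ℂⁿ with u ≠ 0 and Au ≠ 0, set ρ := ‖Au‖/‖u‖, θ := arccos( Re(uᴴAu)/(‖u‖·‖Au‖) ), and z := ρ·e^{iθ} (or z := ρ·e^{−iθ}). Then Θ₁₁·(Re z)² + Θ₂₂·(Im z)² + 2Θ₁₃·(Re z) + Θ₃₃ ≤ 0, i.e. z lies in the conic region C(Θ). -/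

import Mathlib

open Matrix ComplexOrder

/-- The Hermitian part `H_s = (A + Aᴴ)/2` of a complex matrix. -/
noncomputable def hermPart {n : ℕ} (A : Matrix (Fin n) (Fin n) ℂ) :
    Matrix (Fin n) (Fin n) ℂ :=
  ((1 : ℂ) / 2) • (A + Aᴴ)

/-- The Euclidean norm of a complex vector, `‖u‖ = √(Re(uᴴu))`. -/
noncomputable def evnorm {n : ℕ} (u : Fin n → ℂ) : ℝ :=
  Real.sqrt ((star u ⬝ᵥ u).re)

/-- The conic region `C(Θ) = {z : Θ₁₁(Re z)² + Θ₂₂(Im z)² + 2Θ₁₃(Re z) + Θ₃₃ ≤ 0}`. -/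
def conicRegion (Θ11 Θ22 Θ13 Θ33 : ℝ) : Set ℂ :=
  {z : ℂ | Θ11 * z.re ^ 2 + Θ22 * z.im ^ 2 + 2 * Θ13 * z.re + Θ33 ≤ 0}

/-!
Put a = ‖u‖², b = ‖Au‖², c = Re uᴴAu = uᴴH_s u and h = ‖H_s u‖². Testing Q at u gives
(Θ₁₁ - Θ₂₂) h + Θ₂₂ b + 2Θ₁₃ c + Θ₃₃ a ≤ 0. Since θ is the angle between u and Au in the underlying
real inner product space, z = ρe^{iθ} has Re z = c/a and |z|² = b/a, while Cauchy–Schwarz gives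
c² ≤ a h. As Θ₁₁ - Θ₂₂ ≥ 0, a times the conic form at z is then bounded by the left side above.
The region is symmetric under conjugation, which covers ρe^{-iθ}.
-/

open InnerProductGeometry
open scoped InnerProductSpace

lemma conj_mem_conicRegion_iff {Θ11 Θ22 Θ13 Θ33 : ℝ} {z : ℂ} :
    starRingEnd ℂ z ∈ conicRegion Θ11 Θ22 Θ13 Θ33 ↔ z ∈ conicRegion Θ11 Θ22 Θ13 Θ33 := by
  simp [conicRegion]

lemma mem_conicRegion_of_quadratic_bound {Θ11 Θ22 Θ13 Θ33 a b c h : ℝ} {z : ℂ}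
    (hΘ : Θ22 ≤ Θ11) (ha : 0 < a) (hre : z.re * a = c) (hnorm : ‖z‖ ^ 2 * a = b)
    (hcs : c ^ 2 ≤ a * h) (hquad : (Θ11 - Θ22) * h + Θ22 * b + 2 * Θ13 * c + Θ33 * a ≤ 0) :
    z ∈ conicRegion Θ11 Θ22 Θ13 Θ33 := by
  rw [Complex.sq_norm, Complex.normSq_apply] at hnorm
  have hre_sq : a * z.re ^ 2 ≤ h := by
    refine le_of_mul_le_mul_left ?_ ha
    calc a * (a * z.re ^ 2) = c ^ 2 := by rw [← hre]; ring
      _ ≤ a * h := hcs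
  have hscaled : a * (Θ11 * z.re ^ 2 + Θ22 * z.im ^ 2 + 2 * Θ13 * z.re + Θ33)
      = (Θ11 - Θ22) * (a * z.re ^ 2) + Θ22 * b + 2 * Θ13 * c + Θ33 * a := by
    rw [← hre, ← hnorm]; ring
  refine nonpos_of_mul_nonpos_right ?_ ha
  rw [hscaled]
  nlinarith [mul_le_mul_of_nonneg_left hre_sq (sub_nonneg.mpr hΘ)]

section GainPhase

variable {V : Type*} [NormedAddCommGroup V] [InnerProductSpace ℝ V]

lemma re_gainPhase_mul_norm_sq (x y : V) :
    ((‖y‖ / ‖x‖ : ℝ) * Complex.exp (angle x y * Complex.I)).re * ‖x‖ ^ 2 = ⟪x, y⟫_ℝ := by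
  rw [Complex.re_ofReal_mul, Complex.exp_ofReal_mul_I_re, ← cos_angle_mul_norm_mul_norm]
  rcases eq_or_ne ‖x‖ 0 with hx | hx
  · simp [hx]
  · field_simp

lemma norm_gainPhase_sq_mul_norm_sq {x : V} (hx : x ≠ 0) (y : V) :
    ‖(‖y‖ / ‖x‖ : ℝ) * Complex.exp (angle x y * Complex.I)‖ ^ 2 * ‖x‖ ^ 2 = ‖y‖ ^ 2 := by
  rw [norm_mul, Complex.norm_exp_ofReal_mul_I, Complex.norm_real, Real.norm_eq_abs,
    abs_of_nonneg (by positivity)]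
  field_simp [norm_ne_zero_iff.mpr hx]

end GainPhase

section MatrixBridge

variable {ι : Type*} [Fintype ι]

lemma re_star_dotProduct_eq_inner (u v : ι → ℂ) :
    (star u ⬝ᵥ v).re = ⟪(WithLp.toLp 2 u : EuclideanSpace ℂ ι), WithLp.toLp 2 v⟫_ℝ := by
  simp [PiLp.inner_apply, dotProduct, Complex.re_sum, mul_comm]

lemma evnorm_eq_norm {n : ℕ} (v : Fin n → ℂ) : evnorm v = ‖WithLp.toLp 2 v‖ := by
  rw [evnorm, re_star_dotProduct_eq_inner, norm_eq_sqrt_real_inner]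

lemma star_dotProduct_conjTranspose_mul_mulVec (M N : Matrix ι ι ℂ) (u : ι → ℂ) :
    star u ⬝ᵥ ((Mᴴ * N) *ᵥ u) = star (M *ᵥ u) ⬝ᵥ (N *ᵥ u) := by
  rw [← mulVec_mulVec, dotProduct_mulVec, star_mulVec]

lemma re_star_dotProduct_nonpos_of_posSemidef_neg {M : Matrix ι ι ℂ} (hM : (-M).PosSemidef)
    (u : ι → ℂ) : (star u ⬝ᵥ (M *ᵥ u)).re ≤ 0 := by
  have h := (Complex.le_def.mp (hM.dotProduct_mulVec_nonneg u)).1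
  rw [neg_mulVec, dotProduct_neg, Complex.neg_re, Complex.zero_re] at h
  linarith

end MatrixBridge

section HermPart

variable {n : ℕ} (A : Matrix (Fin n) (Fin n) ℂ)

lemma hermPart_isHermitian : (hermPart A).IsHermitian := by
  simp only [IsHermitian, hermPart, conjTranspose_smul, conjTranspose_add,
    conjTranspose_conjTranspose, add_comm Aᴴ]
  norm_num

lemma star_dotProduct_hermPart_mulVec (u : Fin n → ℂ) :
    star u ⬝ᵥ (hermPart A *ᵥ u) = ((star u ⬝ᵥ (A *ᵥ u)).re : ℂ) := by
  have hadj : star u ⬝ᵥ (Aᴴ *ᵥ u) = starRingEnd ℂ (star u ⬝ᵥ (A *ᵥ u)) := by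
    rw [dotProduct_mulVec, ← star_mulVec, star_dotProduct]
    rfl
  rw [hermPart, smul_mulVec, dotProduct_smul, add_mulVec, dotProduct_add, hadj,
    Complex.add_conj, smul_eq_mul]
  push_cast
  ring

lemma re_star_dotProduct_hermPart_quadForm (α β γ δ : ℝ) (u : Fin n → ℂ) :
    (star u ⬝ᵥ (((α : ℂ) • hermPart A ^ 2 + (β : ℂ) • (Aᴴ * A) + (γ : ℂ) • hermPart A
        + (δ : ℂ) • (1 : Matrix (Fin n) (Fin n) ℂ)) *ᵥ u)).re
      = α * ‖WithLp.toLp 2 (hermPart A *ᵥ u)‖ ^ 2 + β * ‖WithLp.toLp 2 (A *ᵥ u)‖ ^ 2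
        + γ * (star u ⬝ᵥ (A *ᵥ u)).re + δ * ‖WithLp.toLp 2 u‖ ^ 2 := by
  have hsq : hermPart A ^ 2 = (hermPart A)ᴴ * hermPart A := by
    rw [(hermPart_isHermitian A).eq, sq]
  simp only [add_mulVec, smul_mulVec, one_mulVec, dotProduct_add, dotProduct_smul, smul_eq_mul,
    Complex.add_re, Complex.re_ofReal_mul, hsq, star_dotProduct_conjTranspose_mul_mulVec,
    star_dotProduct_hermPart_mulVec, Complex.ofReal_re, re_star_dotProduct_eq_inner,
    real_inner_self_eq_norm_sq]

lemma sq_re_star_dotProduct_mulVec_le_norm_hermPart (u : Fin n → ℂ) :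
    (star u ⬝ᵥ (A *ᵥ u)).re ^ 2
      ≤ ‖WithLp.toLp 2 u‖ ^ 2 * ‖WithLp.toLp 2 (hermPart A *ᵥ u)‖ ^ 2 := by
  have h := real_inner_mul_inner_self_le (WithLp.toLp 2 u) (WithLp.toLp 2 (hermPart A *ᵥ u))
  rwa [← re_star_dotProduct_eq_inner, star_dotProduct_hermPart_mulVec, Complex.ofReal_re,
    real_inner_self_eq_norm_sq, real_inner_self_eq_norm_sq, ← sq] at h

end HermPart

theorem stmt14_general {n : ℕ} (A : Matrix (Fin n) (Fin n) ℂ)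
    (Θ11 Θ22 Θ13 Θ33 : ℝ) (hΘ : Θ11 ≥ Θ22)
    (hQ : (-(((Θ11 - Θ22 : ℝ) : ℂ) • hermPart A ^ 2
        + ((Θ22 : ℝ) : ℂ) • (Aᴴ * A)
        + ((2 * Θ13 : ℝ) : ℂ) • hermPart A
        + ((Θ33 : ℝ) : ℂ) • (1 : Matrix (Fin n) (Fin n) ℂ))).PosSemidef)
    (u : Fin n → ℂ) (hu : u ≠ 0)
    (ρ θ : ℝ)
    (hρ : ρ = evnorm (A.mulVec u) / evnorm u)
    (hθ : θ = Real.arccos ((star u ⬝ᵥ A.mulVec u).re / (evnorm u * evnorm (A.mulVec u)))) :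
    (ρ : ℂ) * Complex.exp (θ * Complex.I) ∈ conicRegion Θ11 Θ22 Θ13 Θ33 ∧
    (ρ : ℂ) * Complex.exp (-(θ * Complex.I)) ∈ conicRegion Θ11 Θ22 Θ13 Θ33 := by
  set x := WithLp.toLp 2 u
  set y := WithLp.toLp 2 (A *ᵥ u)
  have hx : x ≠ 0 := by simpa [x] using hu
  have hρθ : (ρ : ℂ) * Complex.exp (θ * Complex.I)
      = (‖y‖ / ‖x‖ : ℝ) * Complex.exp (angle x y * Complex.I) := by
    rw [hρ, hθ, evnorm_eq_norm, evnorm_eq_norm, re_star_dotProduct_eq_inner, angle]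
  have hmem : (ρ : ℂ) * Complex.exp (θ * Complex.I) ∈ conicRegion Θ11 Θ22 Θ13 Θ33 := by
    rw [hρθ]
    refine mem_conicRegion_of_quadratic_bound (h := ‖WithLp.toLp 2 (hermPart A *ᵥ u)‖ ^ 2) hΘ
      (by positivity) (re_gainPhase_mul_norm_sq x y) (norm_gainPhase_sq_mul_norm_sq hx y) ?_ ?_
    · rw [← re_star_dotProduct_eq_inner]
      exact sq_re_star_dotProduct_mulVec_le_norm_hermPart A u
    · have h := re_star_dotProduct_nonpos_of_posSemidef_neg hQ u
      rw [re_star_dotProduct_hermPart_quadForm, re_star_dotProduct_eq_inner] at h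
      linarith
  have hconj : (ρ : ℂ) * Complex.exp (-(θ * Complex.I))
      = starRingEnd ℂ ((ρ : ℂ) * Complex.exp (θ * Complex.I)) := by
    rw [map_mul, Complex.conj_ofReal, ← Complex.exp_conj, map_mul, Complex.conj_ofReal,
      Complex.conj_I, mul_neg]
  exact ⟨hmem, hconj ▸ conj_mem_conicRegion_iff.mpr hmem⟩

/-- If `Θ₁₁ ≥ Θ₂₂` and `Q = (Θ₁₁-Θ₂₂) H_s² + Θ₂₂ AᴴA + 2Θ₁₃ H_s + Θ₃₃ I ⪯ 0`, then for
`u ≠ 0` with `Au ≠ 0`, the gain-phase points `z = ρ e^{±iθ}` lie in `C(Θ)`. -/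
theorem stmt14 {n : ℕ} (hn : 1 ≤ n) (A : Matrix (Fin n) (Fin n) ℂ)
    (Θ11 Θ22 Θ13 Θ33 : ℝ) (hΘ : Θ11 ≥ Θ22)
    (hQ : (-(((Θ11 - Θ22 : ℝ) : ℂ) • hermPart A ^ 2
        + ((Θ22 : ℝ) : ℂ) • (Aᴴ * A)
        + ((2 * Θ13 : ℝ) : ℂ) • hermPart A
        + ((Θ33 : ℝ) : ℂ) • (1 : Matrix (Fin n) (Fin n) ℂ))).PosSemidef)
    (u : Fin n → ℂ) (hu : u ≠ 0) (hAu : A.mulVec u ≠ 0)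
    (ρ θ : ℝ)
    (hρ : ρ = evnorm (A.mulVec u) / evnorm u)
    (hθ : θ = Real.arccos ((star u ⬝ᵥ A.mulVec u).re / (evnorm u * evnorm (A.mulVec u)))) :
    (ρ : ℂ) * Complex.exp (θ * Complex.I) ∈ conicRegion Θ11 Θ22 Θ13 Θ33 ∧
    (ρ : ℂ) * Complex.exp (-(θ * Complex.I)) ∈ conicRegion Θ11 Θ22 Θ13 Θ33 :=
  stmt14_general A Θ11 Θ22 Θ13 Θ33 hΘ hQ u hu ρ θ hρ hθ
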